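/- arXiv:1904.08351 — 10 statements merged into one kernel-verified Lean document; each statement's English description precedes it below -/
import Mathlib

section
/- Let C denote the blobbed Catalan triangle. For all integers i,j with 1 ≤ j ≤ i, one has C(i,j) = Σ_{k=0}^{j} C(i−1−k, j+1−k). -/
/-!
Unfolding the recursion `C(i,j) = C(i-1,j+1) + C(i-1,j-1)` repeatedly on the second summand
telescopes `C(i,j)` into `∑_{k<j} C(i-1-k, j+1-k) + C(i-j, 0)`, and the remainder `C(i-j, 0)`
equals the missing last term `C(i-j-1, 1)`: for `i > j` because `C(·,-1)` vanishes, and for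
`i = j` because both are `1`.
-/

/-- Auxiliary (index-shifted) version of the blobbed Catalan triangle:
`blobbedCAux (i+1) (j+1) = C(i,j)`. -/
def blobbedCAux : ℕ → ℕ → ℕ
  | 0, j => if j % 2 = 0 then 1 else 0
  | 1, j => if j % 2 = 1 then 1 else 0
  | _ + 2, 0 => 0
  | i + 2, j + 1 => blobbedCAux (i + 1) j + blobbedCAux (i + 1) (j + 2)

/-- The blobbed Catalan triangle `C(i,j)`, defined for integers `i, j ≥ -1`:
`C(i,j) = 1` if `i ∈ {-1,0}` and `i+j` is even, `C(i,j) = 0` if `i ∈ {-1,0}` and `i+j`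
is odd, `C(i,-1) = 0` for `i ≥ 1`, and `C(i,j) = C(i-1,j-1) + C(i-1,j+1)` for
`i ≥ 1`, `j ≥ 0`. -/
def blobbedC (i j : ℤ) : ℕ := blobbedCAux (i + 1).toNat (j + 1).toNat

open Finset

lemma blobbedCAux_succ_zero (n : ℕ) : blobbedCAux (n + 1) 0 = 0 := by
  cases n <;> rfl

lemma blobbedC_rec {i j : ℤ} (hi : 1 ≤ i) (hj : 0 ≤ j) :
    blobbedC i j = blobbedC (i - 1) (j - 1) + blobbedC (i - 1) (j + 1) := by
  obtain ⟨n, hn⟩ : ∃ n : ℕ, (i + 1).toNat = n + 2 := ⟨(i - 1).toNat, by omega⟩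
  obtain ⟨m, hm⟩ : ∃ m : ℕ, (j + 1).toNat = m + 1 := ⟨j.toNat, by omega⟩
  rw [blobbedC, hn, hm, blobbedCAux, blobbedC, blobbedC]
  congr 2 <;> omega

lemma blobbedC_neg_one {i : ℤ} (hi : 0 ≤ i) : blobbedC i (-1) = 0 := by
  obtain ⟨n, hn⟩ : ∃ n : ℕ, (i + 1).toNat = n + 1 := ⟨i.toNat, by omega⟩
  rw [blobbedC, hn]
  exact blobbedCAux_succ_zero n

lemma blobbedC_zero_right {i : ℤ} (hi : 0 ≤ i) : blobbedC i 0 = blobbedC (i - 1) 1 := by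
  obtain rfl | hi := hi.eq_or_lt
  · rfl
  · rw [blobbedC_rec hi le_rfl, zero_add, zero_sub, blobbedC_neg_one (by omega), zero_add]

lemma blobbedC_eq_sum_add {i j n : ℤ} (hn : 0 ≤ n) (hni : n ≤ i) (hnj : n ≤ j + 1) :
    blobbedC i j = ∑ k ∈ Ico 0 n, blobbedC (i - 1 - k) (j + 1 - k) + blobbedC (i - n) (j - n) := by
  induction n, hn using Int.leInduction with
  | base => simp
  | succ n hn ih =>
    rw [ih (by omega) (by omega), blobbedC_rec (i := i - n) (by omega) (by omega),
      Ico_add_one_right_eq_Icc, ← Ico_insert_right hn, sum_insert (by simp),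
      sub_add_eq_sub_sub, sub_add_eq_sub_sub, sub_right_comm i 1 n, add_sub_right_comm j 1 n]
    ring

/-- For all integers `1 ≤ j ≤ i`, `C(i,j) = ∑_{k=0}^{j} C(i-1-k, j+1-k)`. -/
theorem blobbedC_diag_sum (i j : ℤ) (hj : 1 ≤ j) (hji : j ≤ i) :
    blobbedC i j = ∑ k ∈ Finset.Icc (0 : ℤ) j, blobbedC (i - 1 - k) (j + 1 - k) := by
  rw [blobbedC_eq_sum_add (n := j) (by omega) hji (by omega), sub_self,
    blobbedC_zero_right (by omega), ← Ico_insert_right (by omega : (0 : ℤ) ≤ j),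
    sum_insert (by simp), add_comm]
  congr 2 <;> ring
end

section
/- Let C denote the blobbed Catalan triangle. For all integers i ≥ 1 and j ≥ 1, one has C(i,j) = Σ_{k=0}^{i} C(i−1−k, j−1+k). -/
/-! Unfolding the recurrence `C(i,j) = C(i-1,j-1) + C(i-1,j+1)` in its second term walks down the
diagonal `(i-k, j+k)` and collects the terms `C(i-1-k, j-1+k)`; at row `0` the walk stops with
`C(0,j+i) = C(-1,j+i-1)`, both being the same parity indicator. Neither step needs more than
`j ≥ 0`, so the induction on `i` runs over all `i, j ≥ 0`. -/

lemma blobbedC_add_one {i j : ℤ} (hi : 0 ≤ i) (hj : 0 ≤ j) :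
    blobbedC (i + 1) j = blobbedC i (j - 1) + blobbedC i (j + 1) := by
  obtain ⟨m, rfl⟩ := Int.eq_ofNat_of_zero_le hi
  obtain ⟨n, rfl⟩ := Int.eq_ofNat_of_zero_le hj
  have hcol : (↑n + 1 : ℤ).toNat = n + 1 := by omega
  simp only [blobbedC, hcol, sub_add_cancel, Int.toNat_natCast, add_assoc,
    show (1 + 1 : ℤ) = (2 : ℕ) by norm_num, ← Nat.cast_add]
  rfl

lemma blobbedC_zero {j : ℤ} (hj : 0 ≤ j) : blobbedC 0 j = blobbedC (-1) (j - 1) := by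
  obtain ⟨n, rfl⟩ := Int.eq_ofNat_of_zero_le hj
  simp only [blobbedC, blobbedCAux, zero_add, neg_add_cancel, Int.toNat_zero, Int.toNat_one,
    sub_add_cancel, Int.toNat_natCast, show (↑n + 1 : ℤ).toNat = n + 1 by omega]
  split_ifs <;> omega

lemma Int.sum_Icc_zero_add_one {M : Type*} [AddCommMonoid M] (f : ℤ → M) {n : ℤ} (hn : 0 ≤ n) :
    ∑ k ∈ Finset.Icc 0 (n + 1), f k = f 0 + ∑ k ∈ Finset.Icc 0 n, f (k + 1) := by
  rw [← Finset.insert_Icc_add_one_left_eq_Icc (by omega), Finset.sum_insert (by simp),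
    ← Finset.map_add_right_Icc 0 n 1, Finset.sum_map]
  rfl

theorem blobbedC_eq_sum {i j : ℤ} (hi : 0 ≤ i) (hj : 0 ≤ j) :
    blobbedC i j = ∑ k ∈ Finset.Icc (0 : ℤ) i, blobbedC (i - 1 - k) (j - 1 + k) := by
  induction i, hi using Int.leInduction generalizing j with
  | base => simp [blobbedC_zero hj]
  | succ i hi ih =>
    rw [blobbedC_add_one hi hj, ih (j := j + 1) (by omega), Int.sum_Icc_zero_add_one _ hi]
    congr 1
    · simp
    · refine Finset.sum_congr rfl fun k _ => ?_
      congr 1 <;> ring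

/-- For all integers `i ≥ 1` and `j ≥ 1`, `C(i,j) = ∑_{k=0}^{i} C(i-1-k, j-1+k)`. -/
theorem blobbedC_row_sum (i j : ℤ) (hi : 1 ≤ i) (hj : 1 ≤ j) :
    blobbedC i j = ∑ k ∈ Finset.Icc (0 : ℤ) i, blobbedC (i - 1 - k) (j - 1 + k) :=
  blobbedC_eq_sum (by omega) (by omega)
end

section
/- Let C denote the blobbed Catalan triangle. For all integers i and j with the same parity satisfying 0 ≤ j ≤ i, one has C(i,j) = Σ_{k=(i−j)/2}^{(i+j)/2} binom(i,k), where binom denotes the binomial coefficient. -/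
/-!
Pascal's rule gives, for the window sums `S_i(a, b) = ∑_{a ≤ k ≤ b} binom(i,k)`,
`S_{i+1}(a, b+1) = S_i(a-1, b) + S_i(a, b+1)`, and moving the term `binom(i, b+1)` from the second
sum to the first turns this into `S_i(a, b) + S_i(a-1, b+1)`. These are exactly the windows of
`C(i, j-1)` and `C(i, j+1)` when `[a, b+1]` is the window of `C(i+1, j)`, so both sides satisfy the
recursion of the triangle. Stated for `j ≥ -1`, the boundary value `C(i,-1) = 0` is an empty window,
and the induction on `i` needs no special case at the edge.
-/

open Finset

theorem sum_Icc_intCast_toNat {M : Type*} [AddCommMonoid M] (f : ℕ → M) (a b : ℕ) :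
    ∑ k ∈ Icc (a : ℤ) b, f k.toNat = ∑ k ∈ Icc a b, f k := by
  refine sum_nbij' Int.toNat (↑) ?_ ?_ ?_ ?_ (fun _ _ ↦ rfl) <;> intro k hk <;>
    simp only [mem_Icc] at hk ⊢ <;> omega

theorem sum_Icc_sub_one_add_sum_Icc_add_one {M : Type*} [AddCommMonoid M] (f : ℕ → M)
    {a b : ℕ} (h : a ≤ b + 1) :
    ∑ k ∈ Icc (a - 1) b, f k + ∑ k ∈ Icc a (b + 1), f k =
      ∑ k ∈ Icc a b, f k + ∑ k ∈ Icc (a - 1) (b + 1), f k := by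
  rw [sum_Icc_succ_top h, sum_Icc_succ_top (by omega)]
  abel

theorem Nat.sum_Icc_succ_choose_add_one (n a b : ℕ) :
    ∑ k ∈ Icc (a + 1) (b + 1), (n + 1).choose k =
      ∑ k ∈ Icc a b, n.choose k + ∑ k ∈ Icc (a + 1) (b + 1), n.choose k := by
  simp only [← map_add_right_Icc, sum_map, addRightEmbedding_apply, Nat.choose_succ_succ',
    sum_add_distrib]

/-- For `a = 0` the truncated `a - 1` is again `0`; the identity survives because
`binom(n+1, 0) = binom(n, 0)`. -/
theorem Nat.sum_Icc_succ_choose (n a b : ℕ) :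
    ∑ k ∈ Icc a (b + 1), (n + 1).choose k =
      ∑ k ∈ Icc (a - 1) b, n.choose k + ∑ k ∈ Icc a (b + 1), n.choose k := by
  cases a with
  | succ a => exact Nat.sum_Icc_succ_choose_add_one n a b
  | zero =>
    simp only [Icc_eq_cons_Ioc (Nat.zero_le _), sum_cons, ← Icc_add_one_left_eq_Ioc,
      Nat.sum_Icc_succ_choose_add_one, Nat.choose_zero_right, zero_tsub]
    ring

theorem Nat.sum_Icc_zero_choose_zero (b : ℕ) : ∑ k ∈ Icc 0 b, (0).choose k = 1 := by
  rw [sum_eq_single_of_mem 0 (by simp)]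
  · simp
  · intro k _ hk; exact Nat.choose_eq_zero_of_lt (Nat.pos_of_ne_zero hk)

theorem blobbedCAux_succ_eq_sum_choose (i j : ℕ) (hij : (i + j) % 2 = 1) :
    blobbedCAux (i + 1) j = ∑ k ∈ Icc ((i + 1 - j) / 2) ((i + j - 1) / 2), i.choose k := by
  induction i generalizing j with
  | zero =>
    rw [blobbedCAux, if_pos (by omega), show (0 + 1 - j) / 2 = 0 by omega,
      Nat.sum_Icc_zero_choose_zero]
  | succ i ih =>
    rcases j with _ | j
    · rw [blobbedCAux, Icc_eq_empty (by omega), sum_empty]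
    set a := (i + 1 - j) / 2
    set b := (i + j - 1) / 2
    have ha : (i + 1 + 1 - (j + 1)) / 2 = a := by omega
    have hb : (i + 1 + (j + 1) - 1) / 2 = b + 1 := by omega
    have ha' : (i + 1 - (j + 2)) / 2 = a - 1 := by omega
    have hb' : (i + (j + 2) - 1) / 2 = b + 1 := by omega
    rw [blobbedCAux, ih j (by omega), ih (j + 2) (by omega), ha, hb, ha', hb',
      Nat.sum_Icc_succ_choose, sum_Icc_sub_one_add_sum_Icc_add_one _ (by omega)]

/-- For all integers `i`, `j` of the same parity with `0 ≤ j ≤ i`,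
`C(i,j) = ∑_{k=(i-j)/2}^{(i+j)/2} binom(i,k)`. -/
theorem blobbedC_eq_sum_choose (i j : ℤ) (hpar : i % 2 = j % 2) (hj : 0 ≤ j) (hji : j ≤ i) :
    blobbedC i j =
      ∑ k ∈ Finset.Icc ((i - j) / 2) ((i + j) / 2), (i.toNat).choose k.toNat := by
  lift i to ℕ using hj.trans hji
  lift j to ℕ using hj
  have hC : blobbedC i j = blobbedCAux (i + 1) (j + 1) := by simp [blobbedC]
  have hlo : ((i : ℤ) - j) / 2 = ((i + 1 - (j + 1)) / 2 : ℕ) := by omega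
  have hhi : ((i : ℤ) + j) / 2 = ((i + (j + 1) - 1) / 2 : ℕ) := by omega
  rw [hC, blobbedCAux_succ_eq_sum_choose i (j + 1) (by omega), hlo, hhi, Int.toNat_natCast,
    sum_Icc_intCast_toNat]
end

section
/- Let C denote the blobbed Catalan triangle. For every integer i ≥ 1, one has C(2i,0) = binom(2i,i), the central binomial coefficient. -/
/-! The closed form `C(a,b) = ∑_{(a-b)/2 ≤ t ≤ (a+b)/2} binom(a,t)` for `a ≡ b (mod 2)` follows
by induction on `a`: Pascal's rule turns the window `[lo, hi+1]` of row `a+1` into the windows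
`[lo, hi]` and `[lo-1, hi+1]` of row `a`, which are those of `C(a,b-1)` and `C(a,b+1)`. At `b = -1`
the window is empty, matching `C(a,-1) = 0`, and at `(a,b) = (2i,0)` it is the single term
`binom(2i,i)`. -/

open Finset

namespace Nat

theorem sum_range_choose_succ (a k : ℕ) :
    ∑ t ∈ range k, (a + 1).choose t
      = ∑ t ∈ range k, a.choose t + ∑ t ∈ range (k - 1), a.choose t := by
  cases k with
  | zero => simp
  | succ k =>
    simp only [sum_range_succ' _ k, Nat.choose_succ_succ', sum_add_distrib, Nat.choose_zero_right,
      Nat.add_sub_cancel]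
    ring

theorem sum_Icc_choose_succ (a : ℕ) {lo hi : ℕ} (h : lo ≤ hi + 1) :
    ∑ t ∈ Icc lo (hi + 1), (a + 1).choose t
      = ∑ t ∈ Icc lo hi, a.choose t + ∑ t ∈ Icc (lo - 1) (hi + 1), a.choose t := by
  simp only [← Ico_add_one_right_eq_Icc]
  have hlo := sum_range_add_sum_Ico (a + 1).choose (by omega : lo ≤ hi + 1 + 1)
  have hmid := sum_range_add_sum_Ico a.choose h
  have hwide := sum_range_add_sum_Ico a.choose (by omega : lo - 1 ≤ hi + 1 + 1)
  have hsucc := sum_range_choose_succ a (hi + 1 + 1)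
  have hlo_succ := sum_range_choose_succ a lo
  simp only [Nat.add_sub_cancel] at hsucc
  omega

end Nat

theorem blobbedCAux_add_two_zero (a : ℕ) : blobbedCAux (a + 2) 0 = 0 := rfl

theorem blobbedCAux_eq_sum_choose (a b : ℕ) (hab : a % 2 = b % 2) :
    blobbedCAux (a + 1) (b + 1) = ∑ t ∈ Icc ((a - b) / 2) ((a + b) / 2), a.choose t := by
  induction a generalizing b with
  | zero =>
    have hb : (b + 1) % 2 = 1 := by omega
    rw [sum_eq_single_of_mem 0 (by simp) fun t _ ht ↦ Nat.choose_eq_zero_of_lt (by omega)]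
    simp [blobbedCAux, hb]
  | succ a ih =>
    cases b with
    | zero =>
      obtain ⟨m, rfl⟩ : ∃ m, a = 2 * m + 1 := ⟨a / 2, by omega⟩
      calc blobbedCAux (2 * m + 3) 1 = blobbedCAux (2 * m + 3) 0 + blobbedCAux (2 * m + 2) 2 := rfl
        _ = ∑ t ∈ Icc m (m + 1), (2 * m + 1).choose t := by
          rw [blobbedCAux_add_two_zero, zero_add, ih 1 (by omega)]
          congr 2 <;> omega
        _ = _ := by
          have hpascal := Nat.sum_Icc_choose_succ (2 * m + 1) (le_refl (m + 1))
          rw [Icc_eq_empty_of_lt m.lt_succ_self, sum_empty, zero_add, Nat.add_sub_cancel] at hpascal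
          rw [← hpascal]
          congr 2 <;> omega
    | succ b =>
      calc blobbedCAux (a + 2) (b + 2)
          = blobbedCAux (a + 1) (b + 1) + blobbedCAux (a + 1) (b + 3) := rfl
        _ = ∑ t ∈ Icc ((a - b) / 2) ((a + b) / 2), a.choose t
            + ∑ t ∈ Icc ((a - b) / 2 - 1) ((a + b) / 2 + 1), a.choose t := by
          rw [ih b (by omega), ih (b + 2) (by omega)]
          congr 3 <;> omega
        _ = _ := by
          rw [← Nat.sum_Icc_choose_succ _ (by omega)]
          congr 2 <;> omega

theorem blobbedC_eq_sum_choose_s4 (a b : ℕ) (hab : a % 2 = b % 2) :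
    blobbedC a b = ∑ t ∈ Icc ((a - b) / 2) ((a + b) / 2), a.choose t :=
  blobbedCAux_eq_sum_choose a b hab

theorem blobbedC_central_binom_general (i : ℕ) :
    blobbedC (2 * (i : ℤ)) 0 = (2 * i).choose i := by
  simpa using blobbedC_eq_sum_choose_s4 (2 * i) 0 (by omega)

/-- For every integer `i ≥ 1`, `C(2i,0)` is the central binomial coefficient `binom(2i,i)`. -/
theorem blobbedC_central_binom (i : ℕ) (hi : 1 ≤ i) :
    blobbedC (2 * (i : ℤ)) 0 = (2 * i).choose i :=
  blobbedC_central_binom_general i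
end

section
/- Let c denote Forder's Catalan triangle. For every integer i ≥ 1, the central binomial coefficient satisfies binom(2i,i) = Σ_{k=1}^{i} 2^k · c(2i−k−1, k−1). -/
/-- Auxiliary (index-shifted) version of Forder's Catalan triangle:
`forderCAux (i+1) (j+1) = c(i,j)`. -/
def forderCAux : ℕ → ℕ → ℕ
  | 0, 0 => 1
  | 0, _ + 1 => 0
  | _ + 1, 0 => 0
  | i + 1, j + 1 => forderCAux i j + forderCAux i (j + 2)

/-- Forder's Catalan triangle `c(i,j)`, defined for integers `i, j ≥ -1`:
`c(-1,-1) = 1`, `c(-1,j) = 0` for `j ≥ 0`, `c(i,-1) = 0` for `i ≥ 0`, and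
`c(i,j) = c(i-1,j-1) + c(i-1,j+1)` for `i, j ≥ 0`. -/
def forderC (i j : ℤ) : ℕ := forderCAux (i + 1).toNat (j + 1).toNat

/-!
The entries of the triangle are ballot numbers, `c(n, k-1) = C(n, m) - C(n, m+1)` when
`n + k = 2m + 1`, as both sides satisfy the same recursion (Pascal's rule twice).
Hence, with `F k = 2^k C(2i-k, i)`, Pascal's rule gives `2^k c(2i-k-1, k-1) = F k - F (k+1)`,
and the sum telescopes to `F 1 - F (i+1) = 2 C(2i-1, i) - 0 = C(2i, i)`.
-/

theorem forderCAux_succ_add_choose {n k m : ℕ} (h : n + k = 2 * m + 1) :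
    forderCAux (n + 1) k + n.choose (m + 1) = n.choose m := by
  induction n generalizing k m with
  | zero =>
    obtain rfl : k = 2 * m + 1 := by omega
    rcases m with _ | m <;> simp [forderCAux, Nat.mul_succ]
  | succ n ih =>
    rcases k with _ | j
    · obtain rfl : n = 2 * m := by omega
      simpa [forderCAux] using Nat.choose_symm_half m
    · obtain ⟨m, rfl⟩ : ∃ m', m = m' + 1 := ⟨m - 1, by omega⟩
      have h₁ := ih (k := j) (m := m) (by omega)
      have h₂ := ih (k := j + 2) (m := m + 1) (by omega)
      rw [forderCAux, Nat.choose_succ_succ' n (m + 1), Nat.choose_succ_succ' n m]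
      omega

theorem forderC_natCast_sub_one (n k : ℕ) :
    forderC ((n : ℤ) - 1) ((k : ℤ) - 1) = forderCAux n k := by
  simp [forderC]

theorem two_pow_mul_forderCAux_eq_sub {i k : ℕ} (hi : 0 < i) (hk : k ≤ i) :
    (2 ^ k * forderCAux (2 * i - k) k : ℤ) =
      2 ^ k * (2 * i - k).choose i - 2 ^ (k + 1) * (2 * i - (k + 1)).choose i := by
  obtain ⟨n, hn⟩ : ∃ n, 2 * i - k = n + 1 := ⟨2 * i - k - 1, by omega⟩
  obtain ⟨m, rfl⟩ : ∃ m, i = m + 1 := ⟨i - 1, by omega⟩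
  have hballot := forderCAux_succ_add_choose (n := n) (k := k) (m := m) (by omega)
  have hpascal := Nat.choose_succ_succ' n m
  have hentry : (forderCAux (n + 1) k : ℤ) = (n + 1).choose (m + 1) - 2 * n.choose (m + 1) := by
    rw [hpascal]; push_cast; omega
  rw [hn, show 2 * (m + 1) - (k + 1) = n by omega, hentry]
  ring

theorem two_mul_choose_two_mul_sub_one {i : ℕ} (hi : 0 < i) :
    2 * (2 * i - 1).choose i = (2 * i).choose i := by
  obtain ⟨m, rfl⟩ : ∃ m, i = m + 1 := ⟨i - 1, by omega⟩
  rw [show 2 * (m + 1) = 2 * m + 1 + 1 by ring, Nat.add_sub_cancel,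
    Nat.choose_succ_succ' (2 * m + 1) m, ← Nat.choose_symm_half]
  ring

/-- For every integer `i ≥ 1`,
`binom(2i,i) = ∑_{k=1}^{i} 2^k · c(2i-k-1, k-1)`. -/
theorem central_binom_eq_sum_forder (i : ℕ) (hi : 1 ≤ i) :
    (2 * i).choose i =
      ∑ k ∈ Finset.Icc 1 i, 2 ^ k * forderC (2 * (i : ℤ) - k - 1) ((k : ℤ) - 1) := by
  set F : ℕ → ℤ := fun k => 2 ^ k * (2 * i - k).choose i with hF
  have hterm : ∀ k ∈ Finset.Icc 1 i,
      ((2 ^ k * forderC (2 * (i : ℤ) - k - 1) ((k : ℤ) - 1) : ℕ) : ℤ) = -(F (k + 1) - F k) := by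
    intro k hk
    rw [Finset.mem_Icc] at hk
    rw [show 2 * (i : ℤ) - k - 1 = ((2 * i - k : ℕ) : ℤ) - 1 by omega, forderC_natCast_sub_one]
    push_cast
    rw [two_pow_mul_forderCAux_eq_sub hi hk.2]
    ring
  have hF_one : F 1 = (2 * i).choose i := by
    rw [hF, ← two_mul_choose_two_mul_sub_one hi]
    push_cast; ring
  have hF_last : F (i + 1) = 0 := by
    simp [hF, Nat.choose_eq_zero_of_lt (show 2 * i - (i + 1) < i by omega)]
  refine Nat.cast_injective (R := ℤ) ?_
  rw [Nat.cast_sum, Finset.sum_congr rfl hterm, Finset.sum_neg_distrib, Finset.sum_Icc_sub hi,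
    hF_last, hF_one]
  ring
end

section
/- Let c denote Forder's Catalan triangle. For all integers i and j with 1 ≤ j ≤ i, one has binom(2i−j, i) = Σ_{k=1}^{i−j+1} 2^{k−1} · c(2i−k−j, j+k−2). (Thus every binomial coefficient is a 2-power weighted sum of entries of the Catalan triangle.) -/
theorem forderCAux_succ_succ (a b : ℕ) :
    forderCAux (a + 1) (b + 1) = forderCAux a b + forderCAux a (b + 2) := rfl

theorem forderCAux_eq_zero_of_lt : ∀ {a b : ℕ}, a < b → forderCAux a b = 0
  | 0, _ + 1, _ => rfl
  | a + 1, b + 1, h => by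
    rw [forderCAux_succ_succ, forderCAux_eq_zero_of_lt (by omega),
      forderCAux_eq_zero_of_lt (by omega)]

theorem forderCAux_self : ∀ a : ℕ, forderCAux a a = 1
  | 0 => rfl
  | a + 1 => by
    rw [forderCAux_succ_succ, forderCAux_self a, forderCAux_eq_zero_of_lt (by omega)]

/-- The ballot formula for paths with `d + h + 1` up-steps and `d` down-steps. -/
theorem forderCAux_ballot : ∀ d h : ℕ,
    forderCAux (2 * d + h + 1) (h + 1) + (2 * d + h).choose (d + h + 1) =
      (2 * d + h).choose (d + h)
  | 0, h => by simp [forderCAux_self]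
  | d + 1, 0 => by
    -- no path ends at height `0`; the symmetry `C(2d+1, d+1) = C(2d+1, d)` takes its place
    have ih := forderCAux_ballot d 1
    have p₁ := Nat.choose_succ_succ' (2 * d + 1) (d + 1)
    have p₂ := Nat.choose_succ_succ' (2 * d + 1) d
    have hsymm := Nat.choose_symm_half d
    have hzero : forderCAux (2 * (d + 1)) 0 = 0 := rfl
    rw [forderCAux_succ_succ, hzero]
    ring_nf at *
    omega
  | d + 1, h + 1 => by
    have ih₁ := forderCAux_ballot (d + 1) h
    have ih₂ := forderCAux_ballot d (h + 2)
    have p₁ := Nat.choose_succ_succ' (2 * d + h + 2) (d + h + 2)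
    have p₂ := Nat.choose_succ_succ' (2 * d + h + 2) (d + h + 1)
    rw [forderCAux_succ_succ]
    ring_nf at *
    omega

theorem choose_eq_sum_forderCAux : ∀ d h : ℕ,
    (2 * d + h + 1).choose (d + h + 1) =
      ∑ k ∈ Finset.range (d + 1), 2 ^ k * forderCAux (2 * d + h + 1 - k) (h + 1 + k)
  | 0, h => by simp [forderCAux_self]
  | d + 1, h => by
    have hshift : ∑ k ∈ Finset.range (d + 1),
        2 ^ (k + 1) * forderCAux (2 * (d + 1) + h + 1 - (k + 1)) (h + 1 + (k + 1)) =
          2 * (2 * d + (h + 1) + 1).choose (d + (h + 1) + 1) := by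
      rw [choose_eq_sum_forderCAux d (h + 1), Finset.mul_sum]
      refine Finset.sum_congr rfl fun k _ => ?_
      rw [pow_succ, show 2 * (d + 1) + h + 1 - (k + 1) = 2 * d + (h + 1) + 1 - k by omega,
        show h + 1 + (k + 1) = h + 1 + 1 + k by omega]
      ring
    rw [Finset.sum_range_succ', hshift, pow_zero, one_mul, Nat.sub_zero, add_zero]
    have hballot := forderCAux_ballot (d + 1) h
    have hpascal := Nat.choose_succ_succ' (2 * d + h + 2) (d + h + 1)
    ring_nf at *
    omega

theorem forderC_eq_forderCAux {x y : ℤ} {a b : ℕ} (ha : x + 1 = a) (hb : y + 1 = b) :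
    forderC x y = forderCAux a b := by
  simp [forderC, ha, hb]

/-- For all integers `1 ≤ j ≤ i`,
`binom(2i-j, i) = ∑_{k=1}^{i-j+1} 2^{k-1} · c(2i-k-j, j+k-2)`. -/
theorem choose_eq_sum_forder (i j : ℕ) (hj : 1 ≤ j) (hji : j ≤ i) :
    (2 * i - j).choose i =
      ∑ k ∈ Finset.Icc 1 (i - j + 1),
        2 ^ (k - 1) * forderC (2 * (i : ℤ) - k - j) ((j : ℤ) + k - 2) := by
  obtain ⟨h, rfl⟩ : ∃ h, j = h + 1 := ⟨j - 1, by omega⟩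
  obtain ⟨d, rfl⟩ : ∃ d, i = d + h + 1 := ⟨i - h - 1, by omega⟩
  rw [show 2 * (d + h + 1) - (h + 1) = 2 * d + h + 1 by omega,
    show d + h + 1 - (h + 1) + 1 = d + 1 by omega, choose_eq_sum_forderCAux,
    ← Finset.Ico_add_one_right_eq_Icc, Finset.sum_Ico_eq_sum_range, Nat.add_sub_cancel]
  refine Finset.sum_congr rfl fun k hk => ?_
  have hkd : k ≤ d := Nat.lt_succ_iff.mp (Finset.mem_range.mp hk)
  rw [Nat.add_sub_cancel_left, forderC_eq_forderCAux (a := 2 * d + h + 1 - k) (b := h + 1 + k)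
    (by push_cast; omega) (by push_cast; omega)]
end

section
/- For every integer n ≥ 1, the number of positive normal forms on n of affine length 0 equals binom(2n,n). (Equivalently, the number of positive fully commutative elements in the Coxeter group of type B_n is binom(2n,n).) -/
/-!
Affine length `0` means that no block ends at `n`, so the right endpoints decrease strictly below
`n`. Count such chains of blocks following a virtual predecessor block `(L, R)`: splitting off
those whose first block ends at `R - 1` gives a recursion in `R`. It is solved by
`∑_{t ≤ u ≤ R} C(R + t, u)` with `t = min (L - 1) R`, because this band of binomial
coefficients satisfies a Pascal-type rule. Chains following `(n + 1, n)` are exactly the normal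
forms of affine length `0`, and there the band is the single coefficient `C(2n, n)`.
-/

/-- `w` is a positive normal form on `n`: a sequence of blocks `(l_i, r_i)` with
`n ≥ l_1 ≥ … ≥ l_k ≥ 0`, `n ≥ r_1 ≥ … ≥ r_k ≥ 0`, `l_i ≤ r_i` for all `i`,
where `l` may repeat (consecutively) only at the value `0` and `r` may repeat only
at the value `n`. -/
def IsPNF (n : ℤ) (w : List (ℤ × ℤ)) : Prop :=
  (∀ p ∈ w, 0 ≤ p.1 ∧ p.1 ≤ p.2 ∧ p.2 ≤ n) ∧
  List.Chain' (fun p q : ℤ × ℤ =>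
    q.1 ≤ p.1 ∧ q.2 ≤ p.2 ∧ (q.1 = p.1 → p.1 = 0) ∧ (q.2 = p.2 → p.2 = n)) w

/-- The affine length of a normal form: the number of blocks whose right endpoint is `n`. -/
def affineLength (n : ℤ) (w : List (ℤ × ℤ)) : ℕ :=
  w.countP (fun p => p.2 = n)

/-- `numPNF n s` is the number `a(n,s)` of positive normal forms on `n` of affine length `s`. -/
noncomputable def numPNF (n : ℤ) (s : ℕ) : ℕ :=
  Nat.card {w : List (ℤ × ℤ) // IsPNF n w ∧ affineLength n w = s}

open Finset

def binomBand (t r : ℕ) : ℕ := ∑ u ∈ Icc t r, (r + t).choose u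

lemma sum_Icc_succ_succ {M : Type*} [AddCommMonoid M] (f : ℕ → M) (a b : ℕ) :
    ∑ u ∈ Icc (a + 1) (b + 1), f u = ∑ v ∈ Icc a b, f (v + 1) := by
  rw [← map_add_right_Icc, sum_map]
  rfl

lemma binomBand_zero_left (r : ℕ) : binomBand 0 r = 2 ^ r := by
  rw [binomBand, ← Nat.sum_range_choose, add_zero, Nat.range_succ_eq_Icc_zero]

lemma binomBand_self (r : ℕ) : binomBand r r = (2 * r).choose r := by
  rw [binomBand, Icc_self, sum_singleton, two_mul]

lemma binomBand_succ_self (r : ℕ) : binomBand (r + 1) (r + 1) = binomBand r (r + 1) := by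
  rw [binomBand_self, binomBand, sum_Icc_succ_top (by omega), Icc_self, sum_singleton,
    show 2 * (r + 1) = r + 1 + r + 1 by ring, Nat.choose_succ_succ']

lemma binomBand_succ_succ {t r : ℕ} (h : t ≤ r) :
    binomBand (t + 1) (r + 1) = binomBand t (r + 1) + binomBand (t + 1) r := by
  set m := r + t + 1
  have top : ∑ u ∈ Icc t (r + 1), m.choose u = ∑ u ∈ Icc t r, m.choose u + m.choose (r + 1) :=
    sum_Icc_succ_top (by omega) _
  have top' : ∑ u ∈ Icc (t + 1) (r + 1), m.choose u
      = ∑ u ∈ Icc (t + 1) r, m.choose u + m.choose (r + 1) :=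
    sum_Icc_succ_top (by omega) _
  calc binomBand (t + 1) (r + 1)
      = ∑ v ∈ Icc t r, (m.choose v + m.choose (v + 1)) := by
        rw [binomBand, show r + 1 + (t + 1) = m + 1 by omega, sum_Icc_succ_succ]
        rfl
    _ = binomBand t (r + 1) + binomBand (t + 1) r := by
        rw [sum_add_distrib, ← sum_Icc_succ_succ (m.choose ·), top', binomBand, binomBand,
          show r + 1 + t = m by omega, show r + (t + 1) = m by omega, top]
        ring

lemma binomBand_succ_right {t r : ℕ} (h : t ≤ r) :
    binomBand t (r + 1) = binomBand t r + ∑ l ∈ range (t + 1), binomBand (l - 1) r := by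
  induction t with
  | zero => simp [binomBand_zero_left, pow_succ, mul_two]
  | succ t ih =>
    rw [binomBand_succ_succ (by omega), ih (by omega), sum_range_succ _ (t + 1),
      Nat.add_sub_cancel]
    ring

lemma binomBand_min_succ_right (t r : ℕ) :
    binomBand (min t (r + 1)) (r + 1)
      = binomBand (min t r) r + ∑ l ∈ range (min t r + 1), binomBand (l - 1) r := by
  rcases le_or_gt t r with h | h
  · rw [min_eq_left h, min_eq_left (by omega), binomBand_succ_right h]
  · rw [min_eq_right (by omega), min_eq_right h.le, binomBand_succ_self,
      binomBand_succ_right le_rfl]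

def BlockStep (p q : ℤ × ℤ) : Prop :=
  q.1 ≤ p.1 ∧ q.2 < p.2 ∧ (q.1 = p.1 → p.1 = 0)

instance : Trans BlockStep BlockStep BlockStep where
  trans {p q s} hpq hqs := by unfold BlockStep at *; omega

def IsBlockChainFrom (b : ℤ × ℤ) (w : List (ℤ × ℤ)) : Prop :=
  (∀ p ∈ w, 0 ≤ p.1 ∧ p.1 ≤ p.2) ∧ (b :: w).IsChain BlockStep

lemma isBlockChainFrom_nil (b : ℤ × ℤ) : IsBlockChainFrom b [] :=
  ⟨by simp, List.isChain_singleton b⟩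

lemma isBlockChainFrom_cons {b p : ℤ × ℤ} {w : List (ℤ × ℤ)} :
    IsBlockChainFrom b (p :: w)
      ↔ (0 ≤ p.1 ∧ p.1 ≤ p.2) ∧ BlockStep b p ∧ IsBlockChainFrom p w := by
  simp only [IsBlockChainFrom, List.mem_cons, forall_eq_or_imp, List.isChain_cons_cons]
  tauto

lemma IsBlockChainFrom.snd_lt {b : ℤ × ℤ} {w : List (ℤ × ℤ)} (h : IsBlockChainFrom b w)
    {p : ℤ × ℤ} (hp : p ∈ w) : p.2 < b.2 :=
  (h.2.rel_cons hp).2.1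

lemma isPNF_and_affineLength_eq_zero_iff (n : ℤ) (w : List (ℤ × ℤ)) :
    IsPNF n w ∧ affineLength n w = 0 ↔ IsBlockChainFrom (n + 1, n) w := by
  constructor
  · rintro ⟨⟨hbound, hchain⟩, haffine⟩
    have hlt : ∀ p ∈ w, p.2 < n := fun p hp =>
      lt_of_le_of_ne (hbound p hp).2.2 (by simpa using List.countP_eq_zero.1 haffine p hp)
    refine ⟨fun p hp => ⟨(hbound p hp).1, (hbound p hp).2.1⟩, List.isChain_cons.2 ⟨?_, ?_⟩⟩
    · intro p hp
      have hpw := List.mem_of_mem_head? hp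
      have := hbound p hpw
      have := hlt p hpw
      unfold BlockStep
      omega
    · refine List.IsChain.imp_of_mem_imp (fun p q hp _ hpq => ?_) hchain
      have := hlt p hp
      unfold BlockStep
      omega
  · intro h
    have hlt : ∀ p ∈ w, p.2 < n := fun p hp => h.snd_lt hp
    refine ⟨⟨fun p hp => ⟨(h.1 p hp).1, (h.1 p hp).2, (hlt p hp).le⟩, ?_⟩, ?_⟩
    · exact (List.isChain_cons.1 h.2).2.imp
        fun p q hpq => ⟨hpq.1, hpq.2.1.le, hpq.2.2, fun he => absurd he hpq.2.1.ne⟩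
    · simpa [affineLength, List.countP_eq_zero] using fun l r hp => (hlt (l, r) hp).ne

/-- A chain from `(L, R + 1)` either starts with a block ending below `R`, and is then a chain
from `(L, R)`, or starts with a block `(l, R)` where `l ≤ L - 1` (for `L = 0` the truncated
subtraction correctly admits `l = 0`). -/
def blockChains : ℕ → ℕ → Finset (List (ℤ × ℤ))
  | _, 0 => {[]}
  | L, R + 1 => blockChains L R ∪ (range (min (L - 1) R + 1)).biUnion fun l =>
      (blockChains l R).map ⟨List.cons ((l : ℤ), (R : ℤ)), List.cons_injective⟩

lemma mem_blockChains (L R : ℕ) (w : List (ℤ × ℤ)) :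
    w ∈ blockChains L R ↔ IsBlockChainFrom (L, R) w := by
  induction R generalizing L w with
  | zero =>
    cases w with
    | nil => simpa [blockChains] using isBlockChainFrom_nil _
    | cons p w =>
      simp only [blockChains, mem_singleton, reduceCtorEq, false_iff, isBlockChainFrom_cons,
        BlockStep]
      omega
  | succ R ih =>
    cases w with
    | nil => simp [blockChains, ih, isBlockChainFrom_nil]
    | cons p w =>
      obtain ⟨l, r⟩ := p
      simp only [blockChains, mem_union, mem_biUnion, mem_range, mem_map,
        Function.Embedding.coeFn_mk, List.cons.injEq, Prod.mk.injEq, ih, isBlockChainFrom_cons,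
        BlockStep]
      constructor
      · rintro (⟨h0, ⟨h1, h2, h3⟩, hw⟩ | ⟨k, hk, _, hw, ⟨rfl, rfl⟩, rfl⟩)
        · exact ⟨h0, ⟨h1, by omega, h3⟩, hw⟩
        · exact ⟨by omega, ⟨by omega, by omega, by omega⟩, hw⟩
      · rintro ⟨h0, ⟨h1, h2, h3⟩, hw⟩
        obtain hr | rfl : r < R ∨ r = R := by omega
        · exact .inl ⟨h0, ⟨h1, hr, h3⟩, hw⟩
        · refine .inr ⟨l.toNat, by omega, w, ?_, ⟨by omega, rfl⟩, rfl⟩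
          rwa [Int.toNat_of_nonneg h0.1]

lemma card_blockChains (L R : ℕ) : #(blockChains L R) = binomBand (min (L - 1) R) R := by
  induction R generalizing L with
  | zero => simp [blockChains, binomBand]
  | succ R ih =>
    rw [blockChains, card_union_of_disjoint, card_biUnion, ih, binomBand_min_succ_right]
    · congr 1
      refine sum_congr rfl fun l hl => ?_
      rw [card_map, ih, min_eq_left (by simp at hl; omega)]
    · intro l _ k _ hlk
      simp only [Function.onFun, disjoint_left, mem_map, Function.Embedding.coeFn_mk]
      rintro _ ⟨w, -, rfl⟩ ⟨w', -, he⟩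
      exact hlk (by simpa using (List.cons.inj he).1.symm)
    · simp only [disjoint_left, mem_biUnion, mem_map, Function.Embedding.coeFn_mk, mem_blockChains]
      rintro _ hw ⟨l, -, w, -, rfl⟩
      exact lt_irrefl (R : ℤ) (hw.snd_lt List.mem_cons_self)

theorem numPNF_affine_zero_general (n : ℕ) :
    numPNF (n : ℤ) 0 = (2 * n).choose n := by
  have h : ∀ w, IsPNF n w ∧ affineLength n w = 0 ↔ w ∈ blockChains (n + 1) n := fun w => by
    rw [mem_blockChains, isPNF_and_affineLength_eq_zero_iff]
    push_cast
    rfl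
  rw [numPNF, Nat.card_congr (Equiv.subtypeEquivRight h), Nat.card_eq_finsetCard,
    card_blockChains, Nat.add_sub_cancel, min_self, binomBand_self]

/-- For every integer `n ≥ 1`, the number of positive normal forms on `n` of affine
length `0` equals `binom(2n, n)`. -/
theorem numPNF_affine_zero (n : ℕ) (hn : 1 ≤ n) :
    numPNF (n : ℤ) 0 = (2 * n).choose n :=
  numPNF_affine_zero_general n
end

section
/- For all integers n ≥ 1 and s ≥ 0, the number a(n,s) of positive normal forms on n of affine length s equals C(2n, 2s), where C denotes the blobbed Catalan triangle. -/
open List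

namespace List

variable {α : Type*} {P : α → Bool} {l : List α}

theorem countP_le_one_iff_pairwise :
    l.countP P ≤ 1 ↔ l.Pairwise fun a b => ¬(P a ∧ P b) := by
  induction l with
  | nil => simp
  | cons a l ih =>
    rw [pairwise_cons]
    by_cases ha : P a
    · rw [countP_cons_of_pos ha, add_le_iff_nonpos_left, Nat.le_zero, countP_eq_zero]
      constructor
      · intro h
        exact ⟨fun b hb hab => h b hb hab.2, ih.mp (by simp [countP_eq_zero.mpr h])⟩
      · exact fun h b hb hb' => h.1 b hb ⟨ha, hb'⟩
    · rw [countP_cons_of_neg ha, ih]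
      simp [ha]

theorem forall_mem_take_countP_and_forall_mem_drop_countP
    (h : l.Pairwise fun a b => P b → P a) :
    (∀ a ∈ l.take (l.countP P), P a) ∧ ∀ a ∈ l.drop (l.countP P), ¬P a := by
  induction l with
  | nil => simp
  | cons a l ih =>
    obtain ⟨ha, hl⟩ := pairwise_cons.mp h
    by_cases hPa : P a
    · rw [countP_cons_of_pos hPa, take_succ_cons, drop_succ_cons]
      exact ⟨forall_mem_cons.mpr ⟨hPa, (ih hl).1⟩, (ih hl).2⟩
    · have hnot : ∀ b ∈ l, ¬P b := fun b hb hPb => hPa (ha b hb hPb)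
      rw [countP_cons_of_neg hPa, countP_eq_zero.mpr hnot, take_zero, drop_zero]
      exact ⟨by simp, forall_mem_cons.mpr ⟨hPa, hnot⟩⟩

end List

section

def PNFRel (n : ℤ) (p q : ℤ × ℤ) : Prop :=
  q.1 ≤ p.1 ∧ q.2 ≤ p.2 ∧ (q.1 = p.1 → p.1 = 0) ∧ (q.2 = p.2 → p.2 = n)

instance (n : ℤ) : Trans (PNFRel n) (PNFRel n) (PNFRel n) where
  trans := fun ⟨h₁, h₂, h₃, h₄⟩ ⟨g₁, g₂, g₃, g₄⟩ =>
    ⟨g₁.trans h₁, g₂.trans h₂, fun h => h₃ (by omega), fun h => h₄ (by omega)⟩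

variable {n m : ℤ} {s : ℕ} {w : List (ℤ × ℤ)} {p : ℤ × ℤ}

theorem isPNF_iff_pairwise :
    IsPNF n w ↔ (∀ p ∈ w, 0 ≤ p.1 ∧ p.1 ≤ p.2 ∧ p.2 ≤ n) ∧ w.Pairwise (PNFRel n) :=
  and_congr_right fun _ => isChain_iff_pairwise (R := PNFRel n)

theorem IsPNF.bounds (hw : IsPNF n w) (hp : p ∈ w) : 0 ≤ p.1 ∧ p.1 ≤ p.2 ∧ p.2 ≤ n :=
  hw.1 p hp

theorem IsPNF.pairwise (hw : IsPNF n w) : w.Pairwise (PNFRel n) :=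
  (isPNF_iff_pairwise.mp hw).2

theorem IsPNF.take_drop_affineLength (hw : IsPNF n w) :
    (∀ p ∈ w.take (affineLength n w), p.2 = n) ∧ ∀ p ∈ w.drop (affineLength n w), p.2 < n := by
  have h := forall_mem_take_countP_and_forall_mem_drop_countP (P := fun p : ℤ × ℤ => p.2 = n)
    (hw.pairwise.imp_of_mem fun {p q} hp _ hpq hq => by
      have := (hw.bounds hp).2.2
      simp only [decide_eq_true_eq] at hq ⊢
      exact le_antisymm this (hq ▸ hpq.2.1))
  refine ⟨fun p hp => by simpa using h.1 p hp, fun p hp => ?_⟩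
  have := (hw.bounds (mem_of_mem_drop hp)).2.2
  have := h.2 p hp
  simp only [decide_eq_true_eq] at this
  omega

theorem IsPNF.snd_eq_of_mem_take (hw : IsPNF n w) (hs : s ≤ affineLength n w)
    (hp : p ∈ w.take s) : p.2 = n :=
  hw.take_drop_affineLength.1 p (take_subset_take_left w hs hp)

theorem IsPNF.countP_snd_eq_le_one {k : ℤ} (hw : IsPNF n w) (hk : k ≠ n) :
    w.countP (fun p => p.2 = k) ≤ 1 :=
  countP_le_one_iff_pairwise.mpr <| hw.pairwise.imp fun hpq ⟨hp, hq⟩ => by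
    simp only [decide_eq_true_eq] at hp hq
    exact hk (hp ▸ hpq.2.2.2 (by rw [hp, hq]))

abbrev PNFs (n : ℤ) (s : ℕ) : Type := {w : List (ℤ × ℤ) // IsPNF n w ∧ affineLength n w = s}

def IsLowPNF (m : ℤ) (w : List (ℤ × ℤ)) : Prop := IsPNF (m + 1) w ∧ ∀ p ∈ w, p.1 ≤ m

abbrev LowPNFs (m : ℤ) (s : ℕ) : Type :=
  {w : List (ℤ × ℤ) // IsLowPNF m w ∧ affineLength (m + 1) w = s}

theorem isPNF_cons_top_iff (hm : 0 ≤ m) :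
    IsPNF (m + 1) ((m + 1, m + 1) :: w) ↔ IsLowPNF m w := by
  simp only [IsLowPNF, isPNF_iff_pairwise, forall_mem_cons, pairwise_cons, PNFRel]
  constructor
  · rintro ⟨⟨-, hb⟩, hrel, hpw⟩
    refine ⟨⟨hb, hpw⟩, fun p hp => ?_⟩
    have := hrel p hp
    omega
  · rintro ⟨⟨hb, hpw⟩, hle⟩
    refine ⟨⟨by omega, hb⟩, fun p hp => ?_, hpw⟩
    have := hle p hp
    have := hb p hp
    exact ⟨by omega, by omega, by omega, fun _ => trivial⟩

theorem affineLength_cons_top :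
    affineLength (m + 1) ((m + 1, m + 1) :: w) = affineLength (m + 1) w + 1 := by
  simp [affineLength]

theorem IsLowPNF.head?_ne_top (hw : IsLowPNF m w) : w.head? ≠ some (m + 1, m + 1) := fun h => by
  have := hw.2 _ (mem_of_mem_head? h)
  omega

theorem IsPNF.isLowPNF_of_head?_ne_top (hw : IsPNF (m + 1) w)
    (h : w.head? ≠ some (m + 1, m + 1)) : IsLowPNF m w := by
  refine ⟨hw, ?_⟩
  cases w with
  | nil => simp
  | cons a t =>
    have ha := hw.bounds mem_cons_self
    have ha₁ : a.1 ≤ m := by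
      by_contra! hlt
      exact h (by simp only [head?_cons, Option.some.injEq]; ext <;> simp <;> omega)
    rw [forall_mem_cons]
    exact ⟨ha₁, fun p hp => ((pairwise_cons.mp hw.pairwise).1 p hp).1.trans ha₁⟩

def topBlockEquiv (hm : 0 ≤ m) (s : ℕ) :
    PNFs (m + 1) s ≃ LowPNFs m s ⊕ {w // IsLowPNF m w ∧ affineLength (m + 1) w + 1 = s} where
  toFun w :=
    if h : w.1.head? = some (m + 1, m + 1) then
      have hw : (m + 1, m + 1) :: w.1.tail = w.1 := cons_head?_tail h
      .inr ⟨w.1.tail, (isPNF_cons_top_iff hm).mp (hw ▸ w.2.1),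
        by rw [← affineLength_cons_top, hw, w.2.2]⟩
    else .inl ⟨w.1, w.2.1.isLowPNF_of_head?_ne_top h, w.2.2⟩
  invFun := Sum.elim (fun w => ⟨w.1, w.2.1.1, w.2.2⟩)
    (fun w => ⟨_, (isPNF_cons_top_iff hm).mpr w.2.1, by rw [affineLength_cons_top, w.2.2]⟩)
  left_inv w := by
    by_cases h : w.1.head? = some (m + 1, m + 1)
    · simpa [h] using Subtype.ext (cons_head?_tail h)
    · simp [h]
  right_inv := by
    rintro (w | w)
    · simp [w.2.1.head?_ne_top]
    · simp

theorem card_pnfs_succ_zero (hm : 0 ≤ m) :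
    ENat.card (PNFs (m + 1) 0) = ENat.card (LowPNFs m 0) := by
  have hempty : ENat.card {w // IsLowPNF m w ∧ affineLength (m + 1) w + 1 = 0} = 0 :=
    (ENat.card_eq_zero_iff_empty _).mpr ⟨fun w => by omega⟩
  rw [ENat.card_congr (topBlockEquiv hm 0), ENat.card_sum, hempty, add_zero]

theorem card_pnfs_succ_succ (hm : 0 ≤ m) (s : ℕ) :
    ENat.card (PNFs (m + 1) (s + 1)) =
      ENat.card (LowPNFs m (s + 1)) + ENat.card (LowPNFs m s) := by
  rw [ENat.card_congr (topBlockEquiv hm (s + 1)), ENat.card_sum]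
  simp only [Nat.add_right_cancel_iff]

theorem affineLength_append (u v : List (ℤ × ℤ)) :
    affineLength n (u ++ v) = affineLength n u + affineLength n v :=
  countP_append

theorem IsPNF.affineLength_drop (hw : IsPNF n w) (hs : s ≤ affineLength n w) :
    affineLength n (w.drop s) = affineLength n w - s := by
  have htake : affineLength n (w.take s) = s := by
    rw [affineLength, countP_eq_length.mpr fun p hp => by simpa using hw.snd_eq_of_mem_take hs hp,
      length_take, min_eq_left (hs.trans countP_le_length)]
  have := affineLength_append (n := n) (w.take s) (w.drop s)
  rw [take_append_drop, htake] at this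
  omega

abbrev capRight (m : ℤ) (p : ℤ × ℤ) : ℤ × ℤ := (p.1, min p.2 m)

def raisePrefix (m : ℤ) (s : ℕ) (w : List (ℤ × ℤ)) : List (ℤ × ℤ) :=
  (w.take s).map (fun p => (p.1, m + 1)) ++ w.drop s

theorem capRight_eq_self (hp : p.2 ≤ m) : capRight m p = p := by
  rw [capRight, min_eq_left hp]

theorem IsLowPNF.isPNF_map_capRight (hw : IsLowPNF m w) : IsPNF m (w.map (capRight m)) := by
  rw [isPNF_iff_pairwise, forall_mem_map, pairwise_map]
  refine ⟨fun p hp => ?_, hw.1.pairwise.imp_of_mem fun {p q} _ hq ⟨h₁, h₂, h₃, h₄⟩ => ?_⟩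
  · have := hw.1.bounds hp
    have := hw.2 p hp
    dsimp only
    omega
  · have := (hw.1.bounds hq).2.2
    exact ⟨h₁, by dsimp only; omega, h₃, fun h => by dsimp only at h ⊢; omega⟩

theorem affineLength_map_capRight (hw : ∀ p ∈ w, p.2 ≤ m + 1) :
    affineLength m (w.map (capRight m)) = affineLength (m + 1) w + w.countP (fun p => p.2 = m) := by
  induction w with
  | nil => rfl
  | cons a w ih =>
    have ha := hw a mem_cons_self
    simp only [affineLength, map_cons, countP_cons] at ih ⊢
    rw [ih fun p hp => hw p (mem_cons_of_mem a hp)]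
    simp only [decide_eq_true_eq]
    split_ifs <;> omega

theorem IsLowPNF.affineLength_map_capRight (hw : IsLowPNF m w) (hs : affineLength (m + 1) w = s) :
    affineLength m (w.map (capRight m)) = s ∨ affineLength m (w.map (capRight m)) = s + 1 := by
  subst hs
  have := hw.1.countP_snd_eq_le_one (k := m) (by omega)
  rw [_root_.affineLength_map_capRight fun p hp => (hw.1.bounds hp).2.2]
  omega

theorem IsPNF.pairwise_raisePrefix (hw : IsPNF m w) (hs : s ≤ affineLength m w)
    (hs' : affineLength m w ≤ s + 1) : (raisePrefix m s w).Pairwise (PNFRel (m + 1)) := by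
  have hpw := hw.pairwise
  rw [← take_append_drop s w, pairwise_append] at hpw
  obtain ⟨htake, hdrop, hcross⟩ := hpw
  have hdrop₁ : (w.drop s).Pairwise fun p q => ¬(p.2 = m ∧ q.2 = m) := by
    have hc : (w.drop s).countP (fun p => p.2 = m) ≤ 1 := by
      have := hw.affineLength_drop hs
      rw [affineLength] at this
      omega
    simpa using countP_le_one_iff_pairwise.mp hc
  refine pairwise_append.mpr ⟨?_, ?_, ?_⟩
  · exact htake.map _ fun p q ⟨h₁, _, h₃, _⟩ => ⟨h₁, le_rfl, h₃, fun _ => rfl⟩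
  · exact (hdrop.and hdrop₁).imp fun ⟨⟨h₁, h₂, h₃, h₄⟩, hne⟩ =>
      ⟨h₁, h₂, h₃, fun h => absurd ⟨h₄ h, h.trans (h₄ h)⟩ hne⟩
  · intro _ hp' q hq
    obtain ⟨p, hp, rfl⟩ := mem_map.mp hp'
    have := hw.bounds (mem_of_mem_drop hq)
    obtain ⟨h₁, -, h₃, -⟩ := hcross p hp q hq
    exact ⟨h₁, by omega, h₃, fun _ => rfl⟩

theorem IsPNF.isLowPNF_raisePrefix (hw : IsPNF m w) (hs : s ≤ affineLength m w)
    (hs' : affineLength m w ≤ s + 1) : IsLowPNF m (raisePrefix m s w) := by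
  have hmem : ∀ p ∈ raisePrefix m s w, ∃ q ∈ w, p.1 = q.1 ∧ (p.2 = q.2 ∨ p.2 = m + 1) := by
    intro p hp
    rcases mem_append.mp hp with hp | hp
    · obtain ⟨q, hq, rfl⟩ := mem_map.mp hp
      exact ⟨q, mem_of_mem_take hq, rfl, .inr rfl⟩
    · exact ⟨p, mem_of_mem_drop hp, rfl, .inl rfl⟩
  refine ⟨isPNF_iff_pairwise.mpr ⟨fun p hp => ?_, hw.pairwise_raisePrefix hs hs'⟩, fun p hp => ?_⟩
  all_goals
    obtain ⟨q, hq, h₁, h₂⟩ := hmem p hp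
    have := hw.bounds hq
    omega

theorem IsPNF.affineLength_raisePrefix (hw : IsPNF m w) (hs : s ≤ affineLength m w) :
    affineLength (m + 1) (raisePrefix m s w) = s := by
  have htake : affineLength (m + 1) ((w.take s).map fun p => (p.1, m + 1)) = s := by
    rw [affineLength, countP_eq_length.mpr (forall_mem_map.mpr fun _ _ => by simp), length_map,
      length_take, min_eq_left (hs.trans countP_le_length)]
  have hdrop : affineLength (m + 1) (w.drop s) = 0 := countP_eq_zero.mpr fun p hp => by
    have := hw.bounds (mem_of_mem_drop hp)
    simp only [decide_eq_true_eq]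
    omega
  rw [raisePrefix, affineLength_append, htake, hdrop, add_zero]

theorem IsPNF.map_capRight_raisePrefix (hw : IsPNF m w) (hs : s ≤ affineLength m w) :
    (raisePrefix m s w).map (capRight m) = w := by
  rw [raisePrefix, map_append, map_map]
  conv_rhs => rw [← take_append_drop s w]
  congr 1
  · refine (map_congr_left fun p hp => ?_).trans (map_id _)
    have := hw.snd_eq_of_mem_take hs hp
    simp [Prod.ext_iff, this]
  · exact (map_congr_left fun p hp => capRight_eq_self (hw.bounds (mem_of_mem_drop hp)).2.2).trans
      (map_id _)

theorem IsLowPNF.raisePrefix_map_capRight (hw : IsLowPNF m w) :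
    raisePrefix m (affineLength (m + 1) w) (w.map (capRight m)) = w := by
  rw [raisePrefix, ← map_take, ← map_drop, map_map]
  conv_rhs => rw [← take_append_drop (affineLength (m + 1) w) w]
  congr 1
  · refine (map_congr_left fun p hp => ?_).trans (map_id _)
    have := hw.1.snd_eq_of_mem_take le_rfl hp
    simp [Prod.ext_iff, this]
  · refine (map_congr_left fun p hp => capRight_eq_self ?_).trans (map_id _)
    have := hw.1.take_drop_affineLength.2 p hp
    omega

def capRightEquiv (m : ℤ) (s : ℕ) :
    LowPNFs m s ≃ {w // IsPNF m w ∧ (affineLength m w = s ∨ affineLength m w = s + 1)} where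
  toFun w := ⟨w.1.map (capRight m), w.2.1.isPNF_map_capRight, w.2.1.affineLength_map_capRight w.2.2⟩
  invFun w := ⟨raisePrefix m s w.1,
    w.2.1.isLowPNF_raisePrefix (by omega) (by omega), w.2.1.affineLength_raisePrefix (by omega)⟩
  left_inv := fun ⟨_, hw, hs⟩ => by subst hs; exact Subtype.ext hw.raisePrefix_map_capRight
  right_inv w := Subtype.ext (w.2.1.map_capRight_raisePrefix (by omega))

theorem card_lowPNFs (m : ℤ) (s : ℕ) :
    ENat.card (LowPNFs m s) = ENat.card (PNFs m s) + ENat.card (PNFs m (s + 1)) := by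
  classical
  have hdisj : Disjoint (fun w => IsPNF m w ∧ affineLength m w = s)
      (fun w => IsPNF m w ∧ affineLength m w = s + 1) := by
    simp only [Pi.disjoint_iff, Prop.disjoint_iff]
    omega
  rw [ENat.card_congr (capRightEquiv m s), ← ENat.card_sum]
  exact ENat.card_congr
    ((Equiv.subtypeEquivRight fun _ => and_or_left).trans (subtypeOrEquiv _ _ hdisj))

theorem isPNF_zero_and_affineLength_iff :
    IsPNF 0 w ∧ affineLength 0 w = s ↔ w = replicate s (0, 0) := by
  constructor
  · rintro ⟨hw, rfl⟩
    have hzero : ∀ p ∈ w, p = (0, 0) := fun p hp => by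
      have := hw.bounds hp
      ext <;> dsimp only <;> omega
    rw [eq_replicate_iff, affineLength, countP_eq_length.mpr fun p hp => by simp [hzero p hp]]
    exact ⟨rfl, hzero⟩
  · rintro rfl
    exact ⟨⟨by simp, isChain_replicate_of_rel _ ⟨le_rfl, le_rfl, fun _ => rfl, fun _ => rfl⟩⟩,
      by simp [affineLength, countP_replicate]⟩

theorem card_pnfs_zero (s : ℕ) : ENat.card (PNFs 0 s) = 1 :=
  (ENat.card_congr (Equiv.subtypeEquivRight fun _ => isPNF_zero_and_affineLength_iff)).trans
    (ENat.card_eq_one_iff_unique.mpr ⟨inferInstance⟩)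

theorem card_pnfs (n s : ℕ) : ENat.card (PNFs n s) = blobbedCAux (2 * n + 1) (2 * s + 1) := by
  induction n generalizing s with
  | zero => simp [card_pnfs_zero, blobbedCAux, Nat.add_mod]
  | succ n ih =>
    -- Both recursions used here are defining equations of `blobbedCAux`.
    have hlow (s : ℕ) : ENat.card (LowPNFs n s) = blobbedCAux (2 * n + 2) (2 * s + 2) := by
      rw [card_lowPNFs, ih, ih]
      norm_cast
    push_cast
    cases s with
    | zero =>
      rw [card_pnfs_succ_zero (Int.natCast_nonneg n), hlow]
      exact congrArg _ (zero_add _).symm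
    | succ s =>
      rw [card_pnfs_succ_succ (Int.natCast_nonneg n), hlow, hlow, add_comm]
      norm_cast

end

theorem numPNF_eq_blobbedC_general (n s : ℕ) :
    numPNF (n : ℤ) s = blobbedC (2 * (n : ℤ)) (2 * (s : ℤ)) := by
  have hcard := card_pnfs n s
  have : Finite (PNFs n s) := ENat.card_lt_top.mp (hcard ▸ ENat.natCast_lt_top _)
  rw [ENat.card_eq_coe_natCard, Nat.cast_inj] at hcard
  rw [numPNF, hcard, blobbedC, show (2 * (n : ℤ) + 1).toNat = 2 * n + 1 by omega,
    show (2 * (s : ℤ) + 1).toNat = 2 * s + 1 by omega]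

/-- For all integers `n ≥ 1` and `s ≥ 0`, `a(n,s) = C(2n, 2s)`. -/
theorem numPNF_eq_blobbedC (n s : ℕ) (hn : 1 ≤ n) :
    numPNF (n : ℤ) s = blobbedC (2 * (n : ℤ)) (2 * (s : ℤ)) :=
  numPNF_eq_blobbedC_general n s
end

section
/- For every integer n ≥ 1, one has a(n+1, 0) = a(n,0) + a(n,1), where a(m,s) denotes the number of positive normal forms on m of affine length s. -/
/-! A normal form on `n + 1` of affine length `0` has all `r_i ≤ n`, so its right endpoints can
never repeat. It is therefore the same thing as a normal form on `n` whose right endpoints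
strictly decrease, which is exactly a normal form on `n` in which the value `n` occurs at most
once, i.e. one of affine length `0` or `1`. Strict decrease in `[0, n]` also bounds the length,
which makes these sets finite so that their cardinalities add up. -/

theorem List.isChain_and_iff {α : Type*} {R S : α → α → Prop} {l : List α} :
    l.IsChain (fun a b => R a b ∧ S a b) ↔ l.IsChain R ∧ l.IsChain S := by
  induction l using List.twoStepInduction <;> simp_all [and_and_and_comm]

section StallingDescent

variable {α : Type*} [LinearOrder α]

def DescentStallingAt (c a b : α) : Prop := b ≤ a ∧ (b = a → a = c)

theorem isChain_gt_of_count_le_one {c : α} {l : List α}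
    (h : l.IsChain (DescentStallingAt c)) (hc : l.count c ≤ 1) : l.IsChain (· > ·) := by
  induction l using List.twoStepInduction with
  | nil | singleton => simp
  | cons_cons a b t _ ih =>
    rw [List.isChain_cons_cons] at h ⊢
    obtain ⟨⟨hba, hstall⟩, htail⟩ := h
    refine ⟨hba.lt_of_ne fun hab => ?_, ih b htail (le_trans ?_ hc)⟩
    · obtain rfl : a = c := hstall hab
      simp [hab] at hc
    · exact List.Sublist.count_le _ (List.sublist_cons_self a _)

theorem isChain_descentStallingAt_and_count_le_one_iff {c : α} {l : List α} :
    l.IsChain (DescentStallingAt c) ∧ l.count c ≤ 1 ↔ l.IsChain (· > ·) := by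
  refine ⟨fun h => isChain_gt_of_count_le_one h.1 h.2, fun h => ⟨?_, ?_⟩⟩
  · exact h.imp fun a b hab => ⟨hab.le, fun heq => absurd heq hab.ne⟩
  · exact List.nodup_iff_count_le_one.mp (h.pairwise.imp ne_of_gt) c

end StallingDescent

theorem isPNF_iff {n : ℤ} {w : List (ℤ × ℤ)} :
    IsPNF n w ↔ (∀ p ∈ w, 0 ≤ p.1 ∧ p.1 ≤ p.2 ∧ p.2 ≤ n) ∧
      (w.map Prod.fst).IsChain (DescentStallingAt 0) ∧
      (w.map Prod.snd).IsChain (DescentStallingAt n) := by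
  rw [IsPNF, List.isChain_map, List.isChain_map, ← List.isChain_and_iff, List.Chain']
  refine and_congr_right fun _ => List.IsChain.iff fun p q => ?_
  simp only [DescentStallingAt]
  tauto

theorem affineLength_eq_count (n : ℤ) (w : List (ℤ × ℤ)) :
    affineLength n w = (w.map Prod.snd).count n := by
  simp only [affineLength, List.count, List.countP_map, Function.comp_def]
  rfl

def IsStrictPNF (n : ℤ) (w : List (ℤ × ℤ)) : Prop :=
  (∀ p ∈ w, 0 ≤ p.1 ∧ p.1 ≤ p.2 ∧ p.2 ≤ n) ∧
    (w.map Prod.fst).IsChain (DescentStallingAt 0) ∧ (w.map Prod.snd).IsChain (· > ·)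

theorem isPNF_and_affineLength_le_one_iff {n : ℤ} {w : List (ℤ × ℤ)} :
    IsPNF n w ∧ affineLength n w ≤ 1 ↔ IsStrictPNF n w := by
  rw [isPNF_iff, affineLength_eq_count, IsStrictPNF,
    ← isChain_descentStallingAt_and_count_le_one_iff (c := n)]
  tauto

theorem isPNF_succ_and_affineLength_eq_zero_iff {n : ℤ} {w : List (ℤ × ℤ)} :
    IsPNF (n + 1) w ∧ affineLength (n + 1) w = 0 ↔ IsStrictPNF n w := by
  rw [isPNF_iff, affineLength_eq_count, IsStrictPNF, List.count_eq_zero]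
  constructor
  · rintro ⟨⟨hbound, hfst, hsnd⟩, hmem⟩
    refine ⟨fun p hp => ?_, hfst, ?_⟩
    · have := hbound p hp
      have : p.2 ≠ n + 1 := fun h => hmem (h ▸ List.mem_map_of_mem hp)
      omega
    · exact isChain_gt_of_count_le_one hsnd (by simp [List.count_eq_zero.mpr hmem])
  · rintro ⟨hbound, hfst, hsnd⟩
    refine ⟨⟨fun p hp => ?_, hfst,
      (isChain_descentStallingAt_and_count_le_one_iff.mpr hsnd).1⟩, fun hmem => ?_⟩
    · have := hbound p hp
      omega
    · obtain ⟨p, hp, hpn⟩ := List.mem_map.mp hmem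
      have := hbound p hp
      omega

theorem IsStrictPNF.length_le {n : ℤ} {w : List (ℤ × ℤ)} (h : IsStrictPNF n w) :
    w.length ≤ (n + 1).toNat := by
  obtain ⟨hbound, -, hsnd⟩ := h
  have hnodup : (w.map Prod.snd).Nodup := hsnd.pairwise.imp ne_of_gt
  have hsub : (w.map Prod.snd).toFinset ⊆ Finset.Icc 0 n := by
    intro x hx
    obtain ⟨p, hp, rfl⟩ := List.mem_map.mp (List.mem_toFinset.mp hx)
    have := hbound p hp
    exact Finset.mem_Icc.mpr ⟨by omega, this.2.2⟩
  calc w.length = (w.map Prod.snd).toFinset.card := by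
        rw [List.toFinset_card_of_nodup hnodup, List.length_map]
    _ ≤ (Finset.Icc 0 n).card := Finset.card_le_card hsub
    _ = (n + 1).toNat := by simp

theorem List.finite_setOf_length_le_forall_mem {α : Type*} {s : Set α} (hs : s.Finite) (N : ℕ) :
    {l : List α | l.length ≤ N ∧ ∀ x ∈ l, x ∈ s}.Finite := by
  have := hs.to_subtype
  refine ((List.finite_length_le s N).image (List.map Subtype.val)).subset ?_
  rintro l ⟨hlen, hmem⟩
  exact ⟨l.pmap Subtype.mk hmem, by simpa using hlen, by simp [List.map_pmap]⟩

theorem finite_setOf_isStrictPNF (n : ℤ) : {w | IsStrictPNF n w}.Finite := by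
  refine (List.finite_setOf_length_le_forall_mem
    (Set.finite_Icc ((0 : ℤ), (0 : ℤ)) (n, n)) (n + 1).toNat).subset fun w hw => ⟨hw.length_le, ?_⟩
  intro p hp
  have := hw.1 p hp
  exact ⟨⟨this.1, by omega⟩, ⟨by omega, this.2.2⟩⟩

theorem Set.ncard_and_le_one {α : Type*} {P : α → Prop} {f : α → ℕ}
    (hfin : {x | P x ∧ f x ≤ 1}.Finite) :
    {x | P x ∧ f x ≤ 1}.ncard = {x | P x ∧ f x = 0}.ncard + {x | P x ∧ f x = 1}.ncard := by
  have hdisj : Disjoint {x | P x ∧ f x = 0} {x | P x ∧ f x = 1} :=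
    Set.disjoint_left.mpr fun x h0 h1 => by simp_all
  rw [← Set.ncard_union_eq hdisj (hfin.subset fun x hx => ⟨hx.1, hx.2 ▸ zero_le_one⟩)
    (hfin.subset fun x hx => ⟨hx.1, hx.2.le⟩), ← Set.ofPred_or]
  simp only [← and_or_left, Nat.le_one_iff_eq_zero_or_eq_one]

theorem numPNF_eq_ncard (n : ℤ) (s : ℕ) :
    numPNF n s = {w | IsPNF n w ∧ affineLength n w = s}.ncard :=
  (Nat.card_coe_set_eq _).symm

theorem numPNF_succ_zero_general (n : ℤ) :
    numPNF (n + 1) 0 = numPNF n 0 + numPNF n 1 := by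
  have hsucc : {w | IsPNF (n + 1) w ∧ affineLength (n + 1) w = 0} =
      {w | IsPNF n w ∧ affineLength n w ≤ 1} := by
    ext w
    exact isPNF_succ_and_affineLength_eq_zero_iff.trans isPNF_and_affineLength_le_one_iff.symm
  have hfin : {w | IsPNF n w ∧ affineLength n w ≤ 1}.Finite := by
    simpa only [isPNF_and_affineLength_le_one_iff] using finite_setOf_isStrictPNF n
  rw [numPNF_eq_ncard, numPNF_eq_ncard, numPNF_eq_ncard, hsucc, Set.ncard_and_le_one hfin]

/-- For every integer `n ≥ 1`, `a(n+1,0) = a(n,0) + a(n,1)`. -/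
theorem numPNF_succ_zero (n : ℤ) (hn : 1 ≤ n) :
    numPNF (n + 1) 0 = numPNF n 0 + numPNF n 1 :=
  numPNF_succ_zero_general n
end

section
/- For all integers n ≥ 1 and s ≥ 1, one has a(n+1, s) = a(n, s−1) + 2·a(n, s) + a(n, s+1), where a(m,t) denotes the number of positive normal forms on m of affine length t. -/
namespace List

theorem Pairwise.forall_lt_of_head?_ne {α : Type*} [LinearOrder α] {R : α → α → Prop}
    {l : List α} (hl : l.Pairwise R) (hR : ∀ x y, R x y → y ≤ x) {c : α}
    (hc : ∀ x ∈ l, x ≤ c) (hne : l.head? ≠ some c) : ∀ x ∈ l, x < c := by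
  cases l with
  | nil => simp
  | cons a l =>
    have ha : a < c := lt_of_le_of_ne (hc a mem_cons_self) (by simpa using hne)
    intro x hx
    rcases mem_cons.1 hx with rfl | hx
    · exact ha
    · exact (hR a x (rel_of_pairwise_cons hl hx)).trans_lt ha

theorem finite_length_le_of_forall_mem {α : Type*} {s : Set α} (hs : s.Finite) (n : ℕ) :
    {l : List α | l.length ≤ n ∧ ∀ x ∈ l, x ∈ s}.Finite := by
  have := hs.to_subtype
  refine ((finite_length_le s n).image (map Subtype.val)).subset ?_
  rintro l ⟨hlen, hmem⟩
  lift l to List s using hmem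
  exact ⟨l, by simpa using hlen, rfl⟩

end List

namespace PNF

open List

def LeftStep (x y : ℤ) : Prop := y ≤ x ∧ (y = x → x = 0)

def RightStep (n x y : ℤ) : Prop := y ≤ x ∧ (y = x → x = n)

theorem isPNF_iff {n : ℤ} {w : List (ℤ × ℤ)} :
    IsPNF n w ↔ (∀ p ∈ w, 0 ≤ p.1 ∧ p.1 ≤ p.2 ∧ p.2 ≤ n) ∧
      (w.map Prod.fst).Pairwise LeftStep ∧ (w.map Prod.snd).Pairwise (RightStep n) := by
  let R : ℤ × ℤ → ℤ × ℤ → Prop := fun p q => LeftStep p.1 q.1 ∧ RightStep n p.2 q.2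
  have : Trans R R R := ⟨fun h₁ h₂ => by simp only [R, LeftStep, RightStep] at *; omega⟩
  have hR : w.IsChain R ↔ IsChain (fun p q : ℤ × ℤ =>
      q.1 ≤ p.1 ∧ q.2 ≤ p.2 ∧ (q.1 = p.1 → p.1 = 0) ∧ (q.2 = p.2 → p.2 = n)) w :=
    ⟨(·.imp fun _ _ h => ⟨h.1.1, h.2.1, h.1.2, h.2.2⟩),
      (·.imp fun _ _ h => ⟨⟨h.1, h.2.2.1⟩, h.2.1, h.2.2.2⟩)⟩
  rw [pairwise_map, pairwise_map, ← pairwise_and_iff, ← isChain_iff_pairwise, hR]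
  rfl

theorem affineLength_eq_count (n : ℤ) (w : List (ℤ × ℤ)) :
    affineLength n w = (w.map Prod.snd).count n := by
  simp only [affineLength, count, countP_map, Function.comp_def]
  congr

theorem forall_mem_take_count_and_drop_count {n : ℤ} {l : List ℤ}
    (hl : l.Pairwise (RightStep n)) (hle : ∀ x ∈ l, x ≤ n) :
    (∀ x ∈ l.take (l.count n), x = n) ∧ ∀ x ∈ l.drop (l.count n), x < n := by
  induction l with
  | nil => simp
  | cons a l ih =>
    obtain ⟨ha, hl⟩ := pairwise_cons.1 hl
    by_cases han : a = n
    · subst han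
      simpa using ih hl fun x hx => hle x (mem_cons_of_mem _ hx)
    · have hlt := (pairwise_cons.2 ⟨ha, hl⟩).forall_lt_of_head?_ne (fun _ _ h => h.1) hle
        (by simpa using han)
      have : (a :: l).count n = 0 := count_eq_zero.2 fun h => (hlt n h).false
      simpa [this] using hlt

/-- `ls` lists the left endpoints of a normal form, `rs` the right endpoints of its blocks after
the first `k`. -/
structure IsCode (a b : ℤ) (k : ℕ) (ls rs : List ℤ) : Prop where
  pairwise_left : ls.Pairwise LeftStep
  mem_left : ∀ l ∈ ls, 0 ≤ l ∧ l ≤ a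
  pairwise_right : rs.Pairwise (· > ·)
  lt_right : ∀ r ∈ rs, r < b
  le_length : k ≤ ls.length
  forall₂ : Forall₂ (· ≤ ·) (ls.drop k) rs

def codes (a b : ℤ) (k : ℕ) : Set (List ℤ × List ℤ) := {x | IsCode a b k x.1 x.2}

section IsCode

variable {a b : ℤ} {k : ℕ} {ls rs : List ℤ}

theorem IsCode.mono {a' b' : ℤ} (h : IsCode a b k ls rs) (ha : a ≤ a') (hb : b ≤ b') :
    IsCode a' b' k ls rs :=
  { h with
    mem_left := fun l hl => ⟨(h.mem_left l hl).1, (h.mem_left l hl).2.trans ha⟩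
    lt_right := fun r hr => (h.lt_right r hr).trans_le hb }

theorem IsCode.length_eq (h : IsCode a b k ls rs) : ls.length = k + rs.length := by
  have := h.forall₂.length_eq
  have := h.le_length
  simp only [length_drop] at *
  omega

theorem IsCode.nonneg_right (h : IsCode a b k ls rs) {r : ℤ} (hr : r ∈ rs) : 0 ≤ r := by
  obtain ⟨hlen, hle⟩ := forall₂_iff_zip.1 h.forall₂
  rw [← map_snd_zip hlen.ge] at hr
  obtain ⟨⟨l, r⟩, hlr, rfl⟩ := mem_map.1 hr
  exact (h.mem_left l (mem_of_mem_drop (of_mem_zip hlr).1)).1.trans (hle hlr)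

theorem IsCode.length_right_le (h : IsCode a b k ls rs) : rs.length ≤ b.toNat := by
  have hnd : rs.Nodup := h.pairwise_right.imp ne_of_gt
  have hsub : rs.toFinset ⊆ Finset.Ico 0 b := fun r hr => by
    rw [mem_toFinset] at hr
    exact Finset.mem_Ico.2 ⟨h.nonneg_right hr, h.lt_right r hr⟩
  simpa [toFinset_card_of_nodup hnd] using Finset.card_le_card hsub

theorem finite_codes (a b : ℤ) (k : ℕ) : (codes a b k).Finite := by
  refine ((finite_length_le_of_forall_mem (Set.finite_Icc 0 a) (k + b.toNat)).prod
    (finite_length_le_of_forall_mem (Set.finite_Icc 0 b) (k + b.toNat))).subset ?_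
  rintro ⟨ls, rs⟩ h
  have hlen := h.length_right_le
  refine ⟨⟨by rw [h.length_eq]; omega, h.mem_left⟩, by omega,
    fun r hr => ⟨h.nonneg_right hr, (h.lt_right r hr).le⟩⟩

end IsCode

def encode (k : ℕ) (w : List (ℤ × ℤ)) : List ℤ × List ℤ :=
  (w.map Prod.fst, (w.drop k).map Prod.snd)

def decode (m : ℤ) (k : ℕ) (x : List ℤ × List ℤ) : List (ℤ × ℤ) :=
  (x.1.take k).map (fun l => (l, m)) ++ (x.1.drop k).zip x.2

section Decode

variable {a b m : ℤ} {k : ℕ} {ls rs : List ℤ}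

theorem IsCode.map_fst_decode (h : IsCode a b k ls rs) :
    (decode m k (ls, rs)).map Prod.fst = ls := by
  simp [decode, map_fst_zip h.forall₂.length_eq.le, Function.comp_def]

theorem IsCode.map_snd_decode (h : IsCode a b k ls rs) :
    (decode m k (ls, rs)).map Prod.snd = replicate k m ++ rs := by
  simp [decode, map_snd_zip h.forall₂.length_eq.ge, Function.comp_def, map_const', h.le_length]

theorem IsCode.isPNF_decode (h : IsCode m m k ls rs) :
    IsPNF m (decode m k (ls, rs)) ∧ affineLength m (decode m k (ls, rs)) = k := by
  refine ⟨isPNF_iff.2 ⟨?_, by rw [h.map_fst_decode]; exact h.pairwise_left, ?_⟩, ?_⟩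
  · intro p hp
    rcases mem_append.1 hp with hp | hp
    · obtain ⟨l, hl, rfl⟩ := mem_map.1 hp
      obtain ⟨hl₀, hlm⟩ := h.mem_left l (mem_of_mem_take hl)
      exact ⟨hl₀, hlm, le_rfl⟩
    · have hl := (h.mem_left p.1 (mem_of_mem_drop (of_mem_zip hp).1)).1
      have hr := h.lt_right p.2 (of_mem_zip hp).2
      exact ⟨hl, forall₂_zip h.forall₂ hp, hr.le⟩
  · rw [h.map_snd_decode, pairwise_append]
    refine ⟨pairwise_replicate.2 (.inr ⟨le_rfl, fun _ => rfl⟩),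
      h.pairwise_right.imp fun hlt => ⟨hlt.le, fun he => absurd he hlt.ne⟩, ?_⟩
    intro x hx r hr
    rw [eq_of_mem_replicate hx]
    exact ⟨(h.lt_right r hr).le, fun _ => rfl⟩
  · rw [affineLength_eq_count, h.map_snd_decode, count_append, count_replicate_self,
      count_eq_zero.2 fun hm => (h.lt_right m hm).false, add_zero]

theorem IsCode.encode_decode (h : IsCode a b k ls rs) :
    encode k (decode m k (ls, rs)) = (ls, rs) := by
  rw [encode, map_drop, h.map_snd_decode, h.map_fst_decode]
  simp

end Decode

section Encode

variable {m : ℤ} {k : ℕ} {w : List (ℤ × ℤ)}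

theorem _root_.IsPNF.forall_mem_take_and_drop (hw : IsPNF m w) (hk : affineLength m w = k) :
    (∀ p ∈ w.take k, p.2 = m) ∧ ∀ p ∈ w.drop k, p.2 < m := by
  obtain ⟨hbd, -, hr⟩ := isPNF_iff.1 hw
  have := forall_mem_take_count_and_drop_count hr fun r hr => by
    obtain ⟨p, hp, rfl⟩ := mem_map.1 hr
    exact (hbd p hp).2.2
  rw [← affineLength_eq_count, hk, ← map_take, ← map_drop] at this
  exact ⟨fun p hp => this.1 _ (mem_map_of_mem hp), fun p hp => this.2 _ (mem_map_of_mem hp)⟩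

theorem isCode_encode (hw : IsPNF m w) (hk : affineLength m w = k) :
    IsCode m m k (encode k w).1 (encode k w).2 := by
  obtain ⟨hbd, hl, hr⟩ := isPNF_iff.1 hw
  have hlt := (hw.forall_mem_take_and_drop hk).2
  refine ⟨hl, fun l hl => ?_, ?_, fun r hr => ?_, ?_, ?_⟩
  · obtain ⟨p, hp, rfl⟩ := mem_map.1 hl
    exact ⟨(hbd p hp).1, (hbd p hp).2.1.trans (hbd p hp).2.2⟩
  · show ((w.drop k).map Prod.snd).Pairwise (· > ·)
    refine (map_drop ▸ hr.sublist (drop_sublist k _)).imp_of_mem fun hx _ hxy => ?_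
    obtain ⟨p, hp, rfl⟩ := mem_map.1 hx
    exact lt_of_le_of_ne hxy.1 fun he => (hlt p hp).ne (hxy.2 he)
  · obtain ⟨p, hp, rfl⟩ := mem_map.1 hr
    exact hlt p hp
  · rw [affineLength_eq_count] at hk
    simpa [encode, ← hk] using count_le_length (a := m) (l := w.map Prod.snd)
  · rw [encode, ← map_drop, forall₂_map_left_iff, forall₂_map_right_iff, forall₂_same]
    exact fun p hp => (hbd p (mem_of_mem_drop hp)).2.1

theorem decode_encode (hw : IsPNF m w) (hk : affineLength m w = k) :
    decode m k (encode k w) = w := by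
  have heq := (hw.forall_mem_take_and_drop hk).1
  rw [decode, encode, ← map_take, ← map_drop, map_map, (zip_of_prod rfl rfl).symm]
  conv_rhs => rw [← take_append_drop k w]
  congr 1
  refine (map_congr_left fun p hp => ?_).trans (map_id _)
  exact Prod.ext rfl (heq p hp).symm

end Encode

def pnfEquivCodes (m : ℤ) (k : ℕ) :
    {w // IsPNF m w ∧ affineLength m w = k} ≃ codes m m k where
  toFun w := ⟨encode k w, isCode_encode w.2.1 w.2.2⟩
  invFun x := ⟨decode m k x, x.2.isPNF_decode⟩
  left_inv w := Subtype.ext (decode_encode w.2.1 w.2.2)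
  right_inv x := Subtype.ext x.2.encode_decode

theorem numPNF_eq_ncard_codes (m : ℤ) (k : ℕ) : numPNF m k = (codes m m k).ncard := by
  rw [numPNF, Nat.card_congr (pnfEquivCodes m k), Nat.card_coe_set_eq]

section Lowering

variable {a b n : ℤ} {k : ℕ} {ls rs : List ℤ}

theorem isCode_cons_left_iff (hn : 0 ≤ n) :
    IsCode (n + 1) b (k + 1) ((n + 1) :: ls) rs ↔ IsCode n b k ls rs := by
  constructor
  · intro h
    obtain ⟨hstep, hls⟩ := pairwise_cons.1 h.pairwise_left
    refine ⟨hls, fun l hl => ⟨(h.mem_left l (mem_cons_of_mem _ hl)).1, ?_⟩, h.pairwise_right,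
      h.lt_right, by simpa using h.le_length, by simpa using h.forall₂⟩
    have := hstep l hl
    unfold LeftStep at this
    omega
  · intro h
    have hle : ∀ l ∈ ls, l ≤ n := fun l hl => (h.mem_left l hl).2
    refine ⟨pairwise_cons.2 ⟨fun l hl => ?_, h.pairwise_left⟩,
      forall_mem_cons.2 ⟨⟨by omega, le_rfl⟩,
        fun l hl => ⟨(h.mem_left l hl).1, by linarith [hle l hl]⟩⟩,
      h.pairwise_right, h.lt_right, by simpa using h.le_length, by simpa using h.forall₂⟩
    have := hle l hl
    unfold LeftStep
    omega

theorem isCode_succ_left_iff (hne : ls.head? ≠ some (n + 1)) :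
    IsCode (n + 1) b k ls rs ↔ IsCode n b k ls rs := by
  refine ⟨fun h => { h with mem_left := fun l hl => ⟨(h.mem_left l hl).1, ?_⟩ },
    fun h => h.mono (by omega) le_rfl⟩
  exact Int.lt_add_one_iff.1 <| h.pairwise_left.forall_lt_of_head?_ne (fun _ _ h => h.1)
    (fun l hl => (h.mem_left l hl).2) hne l hl

theorem codes_succ_left (hn : 0 ≤ n) :
    codes (n + 1) b (k + 1) = Prod.map ((n + 1) :: ·) id '' codes n b k ∪ codes n b (k + 1) := by
  ext ⟨ls, rs⟩
  simp only [codes, Set.mem_union, Set.mem_image, Set.mem_ofPred_eq, Prod.exists, Prod.map,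
    Prod.mk.injEq, id]
  by_cases hls : ls.head? = some (n + 1)
  · obtain ⟨ls, rfl⟩ : ∃ ls', ls = (n + 1) :: ls' :=
      ⟨ls.tail, (cons_head?_tail hls).symm⟩
    have : ¬ IsCode n b (k + 1) ((n + 1) :: ls) rs := fun h => by
      linarith [(h.mem_left (n + 1) mem_cons_self).2]
    simp [isCode_cons_left_iff hn, this]
  · rw [isCode_succ_left_iff hls, or_iff_right]
    rintro ⟨ls, rs, -, rfl, -⟩
    simp at hls

theorem ncard_codes_succ_left (hn : 0 ≤ n) :
    (codes (n + 1) b (k + 1)).ncard = (codes n b k).ncard + (codes n b (k + 1)).ncard := by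
  rw [codes_succ_left hn, Set.ncard_union_eq ?_ ((finite_codes ..).image _) (finite_codes ..),
    Set.ncard_image_of_injective _ (cons_injective.prodMap Function.injective_id)]
  rw [Set.disjoint_left]
  rintro _ ⟨⟨ls, rs⟩, -, rfl⟩ h
  linarith [(h.mem_left (n + 1) mem_cons_self).2]

theorem isCode_cons_right_iff (ha : a ≤ n) :
    IsCode a (n + 1) k ls (n :: rs) ↔ IsCode a n (k + 1) ls rs := by
  constructor
  · intro h
    obtain ⟨hlt, hrs⟩ := pairwise_cons.1 h.pairwise_right
    obtain ⟨x, t, -, ht, hdrop⟩ := forall₂_cons_right_iff.1 h.forall₂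
    refine ⟨h.pairwise_left, h.mem_left, hrs, hlt, ?_, by rwa [← tail_drop, hdrop]⟩
    have := h.length_eq
    simp only [length_cons] at this
    omega
  · intro h
    have hk : k < ls.length := h.le_length
    refine ⟨h.pairwise_left, h.mem_left, pairwise_cons.2 ⟨h.lt_right, h.pairwise_right⟩,
      forall_mem_cons.2 ⟨by omega, fun r hr => by linarith [h.lt_right r hr]⟩, hk.le, ?_⟩
    rw [drop_eq_getElem_cons hk]
    exact .cons ((h.mem_left _ (getElem_mem hk)).2.trans ha) h.forall₂

theorem isCode_succ_right_iff (hne : rs.head? ≠ some n) :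
    IsCode a (n + 1) k ls rs ↔ IsCode a n k ls rs :=
  ⟨fun h => { h with
    lt_right := h.pairwise_right.forall_lt_of_head?_ne (fun _ _ h => h.le)
      (fun r hr => Int.lt_add_one_iff.1 (h.lt_right r hr)) hne },
    fun h => h.mono le_rfl (by omega)⟩

theorem codes_succ_right (ha : a ≤ n) :
    codes a (n + 1) k = codes a n k ∪ Prod.map id (n :: ·) '' codes a n (k + 1) := by
  ext ⟨ls, rs⟩
  simp only [codes, Set.mem_union, Set.mem_image, Set.mem_ofPred_eq, Prod.exists, Prod.map,
    Prod.mk.injEq, id]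
  by_cases hrs : rs.head? = some n
  · obtain ⟨rs, rfl⟩ : ∃ rs', rs = n :: rs' := ⟨rs.tail, (cons_head?_tail hrs).symm⟩
    have : ¬ IsCode a n k ls (n :: rs) := fun h => (h.lt_right n mem_cons_self).false
    simp [isCode_cons_right_iff ha, this]
  · rw [isCode_succ_right_iff hrs, or_iff_left]
    rintro ⟨ls, rs, -, -, rfl⟩
    simp at hrs

theorem ncard_codes_succ_right (ha : a ≤ n) :
    (codes a (n + 1) k).ncard = (codes a n k).ncard + (codes a n (k + 1)).ncard := by
  rw [codes_succ_right ha, Set.ncard_union_eq ?_ (finite_codes ..) ((finite_codes ..).image _),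
    Set.ncard_image_of_injective _ (Function.injective_id.prodMap cons_injective)]
  rw [Set.disjoint_right]
  rintro _ ⟨⟨ls, rs⟩, -, rfl⟩ h
  exact (h.lt_right n mem_cons_self).false

end Lowering

end PNF

/-- For all integers `n ≥ 1` and `s ≥ 1`,
`a(n+1,s) = a(n,s-1) + 2·a(n,s) + a(n,s+1)`. -/
theorem numPNF_succ (n : ℤ) (s : ℕ) (hn : 1 ≤ n) (hs : 1 ≤ s) :
    numPNF (n + 1) s = numPNF n (s - 1) + 2 * numPNF n s + numPNF n (s + 1) := by
  obtain ⟨k, rfl⟩ : ∃ k, s = k + 1 := ⟨s - 1, by omega⟩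
  simp only [PNF.numPNF_eq_ncard_codes, Nat.add_sub_cancel,
    PNF.ncard_codes_succ_left (show 0 ≤ n by omega), PNF.ncard_codes_succ_right le_rfl]
  ring
end
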